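/- Let Σ = X ∪ Y be an alphabet with X = {x_1,…,x_n} and Y disjoint sets. Let G = x_1 Y_1 x_2 Y_2 ⋯ x_n Y_n be a genome where each Y_i for i ∈ [n] is a nonempty string over Y. Let c be the CNP with c(x_i) = 1 for all i ∈ [n] and c(y) = 0 for all y ∈ Y. Then d_GCNP(G, c) = n (in particular, the n deletions removing the substrings Y_1,…,Y_n achieve this distance). -/

import Mathlib

/-- An event is either a deletion `del i j` (removing the substring from position `i`
to position `j`, 1-based) or a duplication `dup i j p` (copying the substring from
position `i` to position `j` and inserting the copy after position `p`). -/
inductive GEvent where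
  | del (i j : ℕ)
  | dup (i j p : ℕ)
deriving DecidableEq

/-- Applying an event to a genome (a list of characters). -/
def applyEvent {α : Type*} (G : List α) : GEvent → List α
  | .del i j => G.take (i - 1) ++ G.drop j
  | .dup i j p => G.take p ++ ((G.drop (i - 1)).take (j - i + 1)) ++ G.drop p

/-- Validity of an event on a genome: `del i j` requires `1 ≤ i ≤ j ≤ |G|`;
`dup i j p` requires `1 ≤ i ≤ j ≤ |G|` and `p ∈ {0,…,i−1} ∪ {j,…,|G|}`. -/
def GEvent.Valid {α : Type*} (G : List α) : GEvent → Prop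
  | .del i j => 1 ≤ i ∧ i ≤ j ∧ j ≤ G.length
  | .dup i j p => 1 ≤ i ∧ i ≤ j ∧ j ≤ G.length ∧ (p ≤ i - 1 ∨ (j ≤ p ∧ p ≤ G.length))

/-- `applyEvents G E` is `G⟨E⟩`, the genome obtained by successively applying
the events of `E` to `G`. -/
def applyEvents {α : Type*} (G : List α) : List GEvent → List α
  | [] => G
  | e :: E => applyEvents (applyEvent G e) E

/-- A sequence of events is valid on `G` if each event is valid on the genome
obtained by applying the previous events. -/
def ValidSeq {α : Type*} (G : List α) : List GEvent → Prop
  | [] => True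
  | e :: E => e.Valid G ∧ ValidSeq (applyEvent G e) E

/-- The copy-number profile of a genome: the number of occurrences of each character. -/
def cnp {α : Type*} [DecidableEq α] (G : List α) : α → ℕ := fun s => G.count s

/-- The Genome-to-CNP distance: the minimum length of a valid event sequence turning `G`
into a genome with CNP `c` (`⊤` if there is none). -/
noncomputable def dGCNP {α : Type*} [DecidableEq α] (G : List α) (c : α → ℕ) : ℕ∞ :=
  sInf { k : ℕ∞ | ∃ E : List GEvent,
    ValidSeq G E ∧ (E.length : ℕ∞) = k ∧ cnp (applyEvents G E) = c }

/-!
The lower bound is a potential argument read backwards along the event sequence. Mark every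
character of a genome as lost (`true`) or kept (`false`), starting from the final genome with
everything kept. A marking pulls back through an event without changing the set of characters
that have a kept copy: a deleted factor is marked lost, and the two copies of a duplicated
factor are merged by `&&`. Each pull-back creates at most one new maximal block of lost
characters. On `x₁ Y₁ ⋯ xₙ Yₙ` the pulled-back marking is forced, since each `xᵢ` occurs once
and must be kept while every character of `Y` must be lost; it has `n` lost blocks, so at
least `n` events were applied.
-/

section ListLemmas

variable {α β : Type*}

lemma List.drop_eq_take_append_drop (l : List α) {k m : ℕ} (h : k ≤ m) :
    l.drop k = (l.drop k).take (m - k) ++ l.drop m := by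
  conv_lhs => rw [← List.take_append_drop (m - k) (l.drop k)]
  rw [List.drop_drop, Nat.add_sub_cancel' h]

lemma List.getLastD_eq_getLastD_of_ne_nil {l : List α} (h : l ≠ []) (d d' : α) :
    l.getLastD d = l.getLastD d' := by
  simp [List.getLastD_eq_getLast?, List.getLast?_eq_some_getLast h]

lemma List.getLastD_append_of_ne_nil (l₁ : List α) {l₂ : List α} (h : l₂ ≠ []) (d d' : α) :
    (l₁ ++ l₂).getLastD d = l₂.getLastD d' := by
  simp [List.getLastD_eq_getLast?, List.getLast?_append_of_ne_nil _ h,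
    List.getLast?_eq_some_getLast h]

lemma List.getLastD_zipWith_and {l₁ l₂ : List Bool} (h : l₁.length = l₂.length) (p q : Bool) :
    (List.zipWith (· && ·) l₁ l₂).getLastD (p && q) = (l₁.getLastD p && l₂.getLastD q) := by
  induction l₁ generalizing l₂ p q with
  | nil => simp_all [List.eq_nil_of_length_eq_zero h.symm]
  | cons a l₁ ih =>
    cases l₂ with
    | nil => simp at h
    | cons b l₂ =>
      simp only [List.zipWith_cons_cons, List.getLastD_cons]
      exact ih (by simpa using h) a b

lemma List.two_le_count_map_fst [DecidableEq α] {L : List (α × β)} {a : α} {b b' : β}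
    (hb : b ≠ b') (h : (a, b) ∈ L) (h' : (a, b') ∈ L) : 2 ≤ (L.map Prod.fst).count a := by
  induction L with
  | nil => simp at h
  | cons q L ih =>
    rw [List.map_cons, List.count_cons]
    rcases List.mem_cons.mp h with rfl | hL <;> rcases List.mem_cons.mp h' with hq | hL'
    · simp_all
    · have : 0 < (L.map Prod.fst).count a :=
        List.count_pos_iff.mpr (List.mem_map_of_mem (f := Prod.fst) hL')
      simp only [beq_self_eq_true, if_true]
      omega
    · subst hq
      have : 0 < (L.map Prod.fst).count a :=
        List.count_pos_iff.mpr (List.mem_map_of_mem (f := Prod.fst) hL)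
      simp only [beq_self_eq_true, if_true]
      omega
    · have := ih hL hL'
      omega

end ListLemmas

/-- `risingEdges false l` is the number of maximal blocks of `true` in `l`; the first argument
is the bit preceding `l`. -/
def risingEdges : Bool → List Bool → ℕ
  | _, [] => 0
  | p, b :: l => (!p && b).toNat + risingEdges b l

@[simp] lemma risingEdges_nil (p : Bool) : risingEdges p [] = 0 := rfl

@[simp] lemma risingEdges_cons (p b : Bool) (l : List Bool) :
    risingEdges p (b :: l) = (!p && b).toNat + risingEdges b l := rfl

lemma risingEdges_append (p : Bool) (l₁ l₂ : List Bool) :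
    risingEdges p (l₁ ++ l₂) = risingEdges p l₁ + risingEdges (l₁.getLastD p) l₂ := by
  induction l₁ generalizing p with
  | nil => simp
  | cons b l ih =>
    simp only [List.cons_append, risingEdges_cons, ih, List.getLastD_cons, Nat.add_assoc]

lemma risingEdges_antitone {p q : Bool} (h : q ≤ p) (l : List Bool) :
    risingEdges p l ≤ risingEdges q l := by
  cases l <;> revert h <;> cases p <;> cases q <;> simp

lemma risingEdges_le_succ (p q : Bool) (l : List Bool) : risingEdges p l ≤ risingEdges q l + 1 := by
  cases l with
  | nil => simp
  | cons b l => cases b <;> cases p <;> cases q <;> simp <;> omega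

lemma risingEdges_zipWith_and (p q : Bool) (l₁ l₂ : List Bool) :
    risingEdges (p && q) (List.zipWith and l₁ l₂) ≤ risingEdges p l₁ + risingEdges q l₂ := by
  induction l₁ generalizing p q l₂ with
  | nil => simp
  | cons a l₁ ih =>
    cases l₂ with
    | nil => simp
    | cons b l₂ =>
      have := ih a b l₂
      simp only [List.zipWith_cons_cons, risingEdges_cons]
      cases a <;> cases b <;> cases p <;> cases q <;> simp at this ⊢ <;> omega

lemma risingEdges_replicate_false (k : ℕ) : risingEdges false (List.replicate k false) = 0 := by
  induction k <;> simp_all [List.replicate_succ]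

lemma risingEdges_true_replicate_true (k : ℕ) : risingEdges true (List.replicate k true) = 0 := by
  induction k <;> simp_all [List.replicate_succ]

lemma risingEdges_replicate_true_le (p : Bool) (k : ℕ) :
    risingEdges p (List.replicate k true) ≤ 1 := by
  cases k with
  | zero => simp
  | succ k => cases p <;> simp [List.replicate_succ, risingEdges_true_replicate_true]

lemma risingEdges_replicate_true_append_le (p : Bool) (k : ℕ) (l : List Bool) :
    risingEdges p (List.replicate k true ++ l) ≤ risingEdges p l + 1 := by
  rw [risingEdges_append]
  cases k with
  | zero => simp
  | succ k =>
    have hlast : (List.replicate (k + 1) true).getLastD p = true := by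
      simp [List.getLastD_eq_getLast?, List.getLast?_replicate]
    rw [hlast]
    have := risingEdges_antitone (Bool.le_true p) l
    have := risingEdges_replicate_true_le p (k + 1)
    omega

lemma risingEdges_flatMap_false_cons_replicate_true {ι : Type*} (f : ι → ℕ) (p : Bool)
    (l : List ι) (hf : ∀ i ∈ l, 0 < f i) :
    risingEdges p (l.flatMap fun i => false :: List.replicate (f i) true) = l.length := by
  induction l generalizing p with
  | nil => simp
  | cons i l ih =>
    obtain ⟨k, hk⟩ := Nat.exists_eq_add_of_lt (hf i List.mem_cons_self)
    have hlast : (List.replicate (f i) true).getLastD false = true := by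
      simp [hk, List.getLastD_eq_getLast?, List.getLast?_replicate]
    rw [List.flatMap_cons, List.cons_append, risingEdges_cons, risingEdges_append, hlast,
      ih true fun j hj => hf j (List.mem_cons_of_mem i hj)]
    simp [hk, List.replicate_succ, risingEdges_true_replicate_true, Nat.add_comm]

lemma risingEdges_append_le_append {l₁ l₂ : List Bool}
    (h : ∀ p, risingEdges p l₁ ≤ risingEdges p l₂ + 1) (p : Bool) (u : List Bool) :
    risingEdges p (u ++ l₁) ≤ risingEdges p (u ++ l₂) + 1 := by
  rw [risingEdges_append, risingEdges_append]
  have := h (u.getLastD p)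
  omega

lemma risingEdges_and_append_le (a₁ a₂ : Bool) (z v : List Bool) :
    risingEdges (a₁ && a₂) (z ++ v) ≤ risingEdges a₁ z + risingEdges a₂ v + 1 := by
  rw [risingEdges_append]
  cases a₁ with
  | false =>
    have := risingEdges_le_succ (z.getLastD false) a₂ v
    simp only [Bool.false_and]
    omega
  | true =>
    cases a₂ with
    | true =>
      have := risingEdges_le_succ (z.getLastD true) true v
      simp only [Bool.and_self]
      omega
    | false =>
      have := risingEdges_le_succ false true z
      have := risingEdges_antitone (Bool.false_le (z.getLastD false)) v
      simp only [Bool.and_false]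
      omega

lemma risingEdges_add_and_le (p a₁ a₂ : Bool) (z v : List Bool) :
    risingEdges p z + risingEdges (a₁ && a₂) v ≤ risingEdges a₁ z + risingEdges a₂ v + 1 := by
  cases a₁ with
  | false =>
    have := risingEdges_antitone (Bool.false_le p) z
    have := risingEdges_le_succ false a₂ v
    simp only [Bool.false_and]
    omega
  | true =>
    have := risingEdges_le_succ p true z
    simp only [Bool.true_and]
    omega

lemma risingEdges_zipWith_and_append_le {m₁ m₂ : List Bool} (h : m₁.length = m₂.length)
    (p : Bool) (z v : List Bool) :
    risingEdges p (List.zipWith and m₁ m₂ ++ (z ++ v))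
      ≤ risingEdges p (m₁ ++ (z ++ (m₂ ++ v))) + 1 := by
  rcases eq_or_ne m₂ [] with rfl | hm₂
  · simp [List.eq_nil_of_length_eq_zero h]
  have hlast : (List.zipWith and m₁ m₂).getLastD p = (m₁.getLastD p && m₂.getLastD true) := by
    simpa using List.getLastD_zipWith_and h p true
  have hlhs := risingEdges_append p (List.zipWith and m₁ m₂) (z ++ v)
  have hrhs : risingEdges p (m₁ ++ (z ++ (m₂ ++ v))) = risingEdges p m₁ +
      risingEdges (m₁.getLastD p) (z ++ m₂) + risingEdges (m₂.getLastD true) v := by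
    rw [risingEdges_append, ← List.append_assoc, risingEdges_append _ (z ++ m₂),
      List.getLastD_append_of_ne_nil z hm₂ _ true]
    omega
  have hz := risingEdges_append (m₁.getLastD p) z m₂
  have hand := risingEdges_zipWith_and p true m₁ m₂
  have hm₂edges := risingEdges_antitone (Bool.le_true (z.getLastD (m₁.getLastD p))) m₂
  have hcore := risingEdges_and_append_le (m₁.getLastD p) (m₂.getLastD true) z v
  rw [hlast] at hlhs
  rw [Bool.and_true] at hand
  omega

lemma risingEdges_append_zipWith_and_le {m₁ m₂ : List Bool} (h : m₁.length = m₂.length)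
    (p : Bool) (z v : List Bool) :
    risingEdges p (z ++ (List.zipWith and m₁ m₂ ++ v))
      ≤ risingEdges p (m₁ ++ (z ++ (m₂ ++ v))) + 1 := by
  rcases eq_or_ne m₂ [] with rfl | hm₂
  · simp [List.eq_nil_of_length_eq_zero h]
  have hm₁ : m₁ ≠ [] := by rintro rfl; simp_all [eq_comm]
  have hlast : (List.zipWith and m₁ m₂).getLastD (z.getLastD p)
      = (m₁.getLastD true && m₂.getLastD true) := by
    have := List.getLastD_zipWith_and h true (z.getLastD p)
    rwa [List.getLastD_eq_getLastD_of_ne_nil hm₂ _ true, Bool.true_and] at this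
  have hlhs : risingEdges p (z ++ (List.zipWith and m₁ m₂ ++ v)) = risingEdges p z +
      risingEdges (z.getLastD p) (List.zipWith and m₁ m₂) +
      risingEdges (m₁.getLastD true && m₂.getLastD true) v := by
    rw [risingEdges_append, risingEdges_append, hlast]
    omega
  have hrhs : risingEdges p (m₁ ++ (z ++ (m₂ ++ v))) = risingEdges p m₁ +
      risingEdges (m₁.getLastD true) (z ++ m₂) + risingEdges (m₂.getLastD true) v := by
    rw [← List.append_assoc z, risingEdges_append,
      List.getLastD_eq_getLastD_of_ne_nil hm₁ p true, risingEdges_append _ (z ++ m₂),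
      List.getLastD_append_of_ne_nil z hm₂ _ true]
    omega
  have hz := risingEdges_append p z m₂
  have hand := risingEdges_zipWith_and true (z.getLastD p) m₁ m₂
  have hm₁edges := risingEdges_antitone (Bool.le_true p) m₁
  have hcore := risingEdges_add_and_le p (m₁.getLastD true) (m₂.getLastD true) (z ++ m₂) v
  rw [Bool.true_and] at hand
  omega

section Marking

variable {α : Type*}

def keptChars (L : List (α × Bool)) : Set α := {a | (a, false) ∈ L}

@[simp] lemma keptChars_append (L₁ L₂ : List (α × Bool)) :
    keptChars (L₁ ++ L₂) = keptChars L₁ ∪ keptChars L₂ := by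
  ext; simp [keptChars]

def lostBlocks (L : List (α × Bool)) : ℕ := risingEdges false (L.map Prod.snd)

def andMarks (L₁ L₂ : List (α × Bool)) : List (α × Bool) :=
  List.zipWith (fun p q => (p.1, p.2 && q.2)) L₁ L₂

lemma map_fst_andMarks {L₁ L₂ : List (α × Bool)} (h : L₁.map Prod.fst = L₂.map Prod.fst) :
    (andMarks L₁ L₂).map Prod.fst = L₁.map Prod.fst := by
  induction L₁ generalizing L₂ with
  | nil => rfl
  | cons p L₁ ih =>
    cases L₂ with
    | nil => simp at h
    | cons q L₂ =>
      simp only [List.map_cons, List.cons.injEq] at h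
      simp [andMarks, ← ih h.2]

lemma map_snd_andMarks (L₁ L₂ : List (α × Bool)) :
    (andMarks L₁ L₂).map Prod.snd = List.zipWith and (L₁.map Prod.snd) (L₂.map Prod.snd) := by
  simp [andMarks, List.map_zipWith, List.zipWith_map]

lemma keptChars_andMarks {L₁ L₂ : List (α × Bool)} (h : L₁.map Prod.fst = L₂.map Prod.fst) :
    keptChars (andMarks L₁ L₂) = keptChars L₁ ∪ keptChars L₂ := by
  ext a
  induction L₁ generalizing L₂ with
  | nil => simp_all [keptChars, andMarks, List.eq_nil_of_map_eq_nil h.symm]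
  | cons p L₁ ih =>
    cases L₂ with
    | nil => simp at h
    | cons q L₂ =>
      simp only [List.map_cons, List.cons.injEq] at h
      have := ih h.2
      simp only [keptChars, andMarks, Set.mem_ofPred_eq, Set.mem_union, List.zipWith_cons_cons,
        List.mem_cons] at this ⊢
      rw [this]
      obtain ⟨a₁, b₁⟩ := p
      obtain ⟨a₂, b₂⟩ := q
      obtain rfl : a₁ = a₂ := h.1
      cases b₁ <;> cases b₂ <;> simp <;> tauto

lemma exists_marking_of_deletion {U S V : List α} {L' : List (α × Bool)}
    (hL' : L'.map Prod.fst = U ++ V) :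
    ∃ L : List (α × Bool), L.map Prod.fst = U ++ S ++ V ∧ keptChars L = keptChars L' ∧
      lostBlocks L ≤ lostBlocks L' + 1 := by
  obtain ⟨U', V', rfl, rfl, rfl⟩ := List.map_eq_append_iff.mp hL'
  refine ⟨U' ++ S.map (·, true) ++ V', by simp [Function.comp_def], ?_, ?_⟩
  · ext a
    simp [keptChars]
  · have := risingEdges_append_le_append
      (risingEdges_replicate_true_append_le · S.length (V'.map Prod.snd)) false (U'.map Prod.snd)
    simpa [lostBlocks, Function.comp_def, List.map_const'] using this

lemma exists_marking_of_duplication_after {U S Z V : List α} {L' : List (α × Bool)}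
    (hL' : L'.map Prod.fst = U ++ S ++ Z ++ S ++ V) :
    ∃ L : List (α × Bool), L.map Prod.fst = U ++ S ++ Z ++ V ∧ keptChars L = keptChars L' ∧
      lostBlocks L ≤ lostBlocks L' + 1 := by
  obtain ⟨L₁, V', rfl, hL₁, rfl⟩ := List.map_eq_append_iff.mp hL'
  obtain ⟨L₂, M₂, rfl, hL₂, hM₂⟩ := List.map_eq_append_iff.mp hL₁
  obtain ⟨L₃, Z', rfl, hL₃, rfl⟩ := List.map_eq_append_iff.mp hL₂
  obtain ⟨U', M₁, rfl, rfl, hM₁⟩ := List.map_eq_append_iff.mp hL₃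
  have hM : M₁.map Prod.fst = M₂.map Prod.fst := hM₁.trans hM₂.symm
  refine ⟨U' ++ andMarks M₁ M₂ ++ Z' ++ V', by simp [map_fst_andMarks hM, hM₁], ?_, ?_⟩
  · simp only [keptChars_append, keptChars_andMarks hM]
    ac_rfl
  · have hlen : (M₁.map Prod.snd).length = (M₂.map Prod.snd).length := by
      simpa using congrArg List.length hM
    have := risingEdges_append_le_append
      (risingEdges_zipWith_and_append_le hlen · (Z'.map Prod.snd) (V'.map Prod.snd)) false
      (U'.map Prod.snd)
    simpa [lostBlocks, map_snd_andMarks] using this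

lemma exists_marking_of_duplication_before {U S Z V : List α} {L' : List (α × Bool)}
    (hL' : L'.map Prod.fst = U ++ S ++ Z ++ S ++ V) :
    ∃ L : List (α × Bool), L.map Prod.fst = U ++ Z ++ S ++ V ∧ keptChars L = keptChars L' ∧
      lostBlocks L ≤ lostBlocks L' + 1 := by
  obtain ⟨L₁, V', rfl, hL₁, rfl⟩ := List.map_eq_append_iff.mp hL'
  obtain ⟨L₂, M₂, rfl, hL₂, hM₂⟩ := List.map_eq_append_iff.mp hL₁
  obtain ⟨L₃, Z', rfl, hL₃, rfl⟩ := List.map_eq_append_iff.mp hL₂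
  obtain ⟨U', M₁, rfl, rfl, hM₁⟩ := List.map_eq_append_iff.mp hL₃
  have hM : M₁.map Prod.fst = M₂.map Prod.fst := hM₁.trans hM₂.symm
  refine ⟨U' ++ Z' ++ andMarks M₁ M₂ ++ V', by simp [map_fst_andMarks hM, hM₁], ?_, ?_⟩
  · simp only [keptChars_append, keptChars_andMarks hM]
    ac_rfl
  · have hlen : (M₁.map Prod.snd).length = (M₂.map Prod.snd).length := by
      simpa using congrArg List.length hM
    have := risingEdges_append_le_append
      (risingEdges_append_zipWith_and_le hlen · (Z'.map Prod.snd) (V'.map Prod.snd)) false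
      (U'.map Prod.snd)
    simpa [lostBlocks, map_snd_andMarks] using this

end Marking

section Events

variable {α : Type*}

lemma applyEvent_del_eq {H : List α} {i j : ℕ} (h : (GEvent.del i j).Valid H) :
    ∃ U S V, H = U ++ S ++ V ∧ applyEvent H (.del i j) = U ++ V := by
  obtain ⟨hi, hij, -⟩ := h
  refine ⟨H.take (i - 1), (H.drop (i - 1)).take (j - (i - 1)), H.drop j, ?_, rfl⟩
  rw [List.append_assoc, ← H.drop_eq_take_append_drop (by omega), List.take_append_drop]

lemma applyEvent_dup_eq_of_le {H : List α} {i j p : ℕ} (h : (GEvent.dup i j p).Valid H)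
    (hp : p ≤ i - 1) :
    ∃ U Z S V, H = U ++ Z ++ S ++ V ∧ applyEvent H (.dup i j p) = U ++ S ++ Z ++ S ++ V := by
  obtain ⟨hi, hij, -⟩ := h
  have hS : H.drop (i - 1) = (H.drop (i - 1)).take (j - i + 1) ++ H.drop j := by
    rw [show j - i + 1 = j - (i - 1) by omega]
    exact H.drop_eq_take_append_drop (by omega)
  have hZ := H.drop_eq_take_append_drop hp
  set Z := (H.drop p).take (i - 1 - p)
  set S := (H.drop (i - 1)).take (j - i + 1)
  refine ⟨H.take p, Z, S, H.drop j, ?_, ?_⟩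
  · rw [List.append_assoc, List.append_assoc, ← hS, ← hZ, List.take_append_drop]
  · change H.take p ++ S ++ H.drop p = _
    rw [hZ, hS]
    simp only [List.append_assoc]

lemma applyEvent_dup_eq_of_ge {H : List α} {i j p : ℕ} (h : (GEvent.dup i j p).Valid H)
    (hp : j ≤ p ∧ p ≤ H.length) :
    ∃ U S Z V, H = U ++ S ++ Z ++ V ∧ applyEvent H (.dup i j p) = U ++ S ++ Z ++ S ++ V := by
  obtain ⟨hi, hij, hj, -⟩ := h
  have hS : H.drop (i - 1) = (H.drop (i - 1)).take (j - i + 1) ++ H.drop j := by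
    rw [show j - i + 1 = j - (i - 1) by omega]
    exact H.drop_eq_take_append_drop (by omega)
  have hZ := H.drop_eq_take_append_drop hp.1
  set U := H.take (i - 1)
  set S := (H.drop (i - 1)).take (j - i + 1)
  set Z := (H.drop j).take (p - j)
  have hH : H = U ++ S ++ Z ++ H.drop p := by
    rw [List.append_assoc, List.append_assoc, ← hZ, ← hS, List.take_append_drop]
  have hlen : (U ++ S ++ Z).length = p := by
    simp [U, S, Z]
    omega
  refine ⟨U, S, Z, H.drop p, hH, ?_⟩
  have htake : H.take p = U ++ S ++ Z := by
    conv_lhs => rw [hH]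
    rw [List.take_left' hlen]
  change H.take p ++ S ++ H.drop p = _
  rw [htake]

lemma exists_marking_of_applyEvent {H : List α} {e : GEvent} (he : e.Valid H)
    {L' : List (α × Bool)} (hL' : L'.map Prod.fst = applyEvent H e) :
    ∃ L : List (α × Bool), L.map Prod.fst = H ∧ keptChars L = keptChars L' ∧
      lostBlocks L ≤ lostBlocks L' + 1 := by
  cases e with
  | del i j =>
    obtain ⟨U, S, V, rfl, happ⟩ := applyEvent_del_eq he
    exact exists_marking_of_deletion (happ ▸ hL')
  | dup i j p =>
    rcases he.2.2.2 with hp | hp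
    · obtain ⟨U, Z, S, V, rfl, happ⟩ := applyEvent_dup_eq_of_le he hp
      exact exists_marking_of_duplication_before (happ ▸ hL')
    · obtain ⟨U, S, Z, V, rfl, happ⟩ := applyEvent_dup_eq_of_ge he hp
      exact exists_marking_of_duplication_after (happ ▸ hL')

lemma exists_marking_of_validSeq {H : List α} {E : List GEvent} (hE : ValidSeq H E) :
    ∃ L : List (α × Bool), L.map Prod.fst = H ∧ keptChars L = {a | a ∈ applyEvents H E} ∧
      lostBlocks L ≤ E.length := by
  induction E generalizing H with
  | nil =>
    refine ⟨H.map (·, false), by simp [Function.comp_def], ?_, ?_⟩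
    · ext a
      simp [keptChars, applyEvents]
    · simp [lostBlocks, Function.comp_def, List.map_const', risingEdges_replicate_false]
  | cons e E ih =>
    obtain ⟨L', hL', hkept', hcost'⟩ := ih hE.2
    obtain ⟨L, hL, hkept, hcost⟩ := exists_marking_of_applyEvent hE.1 hL'
    exact ⟨L, hL, hkept.trans hkept', by simp only [List.length_cons]; omega⟩

lemma applyEvent_del_infix (A S B : List α) :
    applyEvent (A ++ S ++ B) (.del (A.length + 1) (A.length + S.length)) = A ++ B := by
  simp [applyEvent, List.drop_append]

lemma valid_del_infix (A : List α) {S : List α} (hS : S ≠ []) (B : List α) :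
    (GEvent.del (A.length + 1) (A.length + S.length)).Valid (A ++ S ++ B) := by
  have := List.length_pos_iff.mpr hS
  simp only [GEvent.Valid, List.length_append]
  omega

lemma exists_deletions_flatMap {ι : Type*} (a : ι → α) (t : ι → List α) (ht : ∀ i, t i ≠ [])
    (l : List ι) (P : List α) :
    ∃ E : List GEvent, (∀ e ∈ E, ∃ i j, e = GEvent.del i j) ∧ E.length = l.length ∧
      ValidSeq (P ++ l.flatMap fun i => a i :: t i) E ∧
      applyEvents (P ++ l.flatMap fun i => a i :: t i) E = P ++ l.map a := by
  induction l generalizing P with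
  | nil => exact ⟨[], by simp, rfl, trivial, rfl⟩
  | cons i l ih =>
    obtain ⟨E, hdel, hlen, hvalid, happ⟩ := ih (P ++ [a i])
    have hsplit : P ++ (i :: l).flatMap (fun i => a i :: t i)
        = (P ++ [a i]) ++ t i ++ l.flatMap fun i => a i :: t i := by
      simp
    refine ⟨.del ((P ++ [a i]).length + 1) ((P ++ [a i]).length + (t i).length) :: E,
      ?_, by simp [hlen], ?_, ?_⟩
    · simpa using hdel
    · rw [hsplit]
      exact ⟨valid_del_infix _ (ht i) _, by rwa [applyEvent_del_infix]⟩
    · rw [hsplit, applyEvents, applyEvent_del_infix, happ]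
      simp

end Events

section Alternating

variable {α : Type*} [DecidableEq α] {n : ℕ} {x : Fin n → α} {Y : Set α} {Ys : Fin n → List α}

lemma count_flatMap_cons_self (hx : Function.Injective x) (hXY : ∀ i, x i ∉ Y)
    (hYs : ∀ i, ∀ a ∈ Ys i, a ∈ Y) (i : Fin n) :
    ((List.finRange n).flatMap fun j => x j :: Ys j).count (x i) = 1 := by
  have hblock : ∀ j, (x j :: Ys j).count (x i) = if j = i then 1 else 0 := by
    intro j
    have : (Ys j).count (x i) = 0 := List.count_eq_zero.mpr fun h => hXY i (hYs j _ h)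
    simp [List.count_cons, this, hx.eq_iff]
  simp [List.count_flatMap, ← List.ofFn_eq_map, List.sum_ofFn, Function.comp_def, hblock]

lemma n_le_lostBlocks (hx : Function.Injective x) (hXY : ∀ i, x i ∉ Y)
    (hYs : ∀ i, ∀ a ∈ Ys i, a ∈ Y) (hYne : ∀ i, Ys i ≠ []) {L : List (α × Bool)}
    (hL : L.map Prod.fst = (List.finRange n).flatMap fun i => x i :: Ys i)
    (hkept : keptChars L = Set.range x) :
    n ≤ lostBlocks L := by
  classical
  have hsnd : ∀ q ∈ L, q.2 = decide (q.1 ∈ Y) := by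
    rintro ⟨a, b⟩ hq
    have ha : a ∈ L.map Prod.fst := List.mem_map_of_mem hq
    obtain ⟨i, -, ha⟩ := List.mem_flatMap.mp (hL ▸ ha)
    rcases List.mem_cons.mp ha with rfl | ha
    · have hkeep : (x i, false) ∈ L := (Set.ext_iff.mp hkept (x i)).mpr ⟨i, rfl⟩
      cases b
      · simp [hXY i]
      · have := List.two_le_count_map_fst (by decide) hq hkeep
        rw [hL, count_flatMap_cons_self hx hXY hYs] at this
        omega
    · cases b
      · obtain ⟨j, rfl⟩ := (Set.ext_iff.mp hkept a).mp hq
        exact absurd (hYs i _ ha) (hXY j)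
      · simp [hYs i a ha]
  have hmarks : L.map Prod.snd
      = (List.finRange n).flatMap fun i => false :: List.replicate (Ys i).length true := by
    rw [List.map_congr_left hsnd]
    change L.map ((fun a => decide (a ∈ Y)) ∘ Prod.fst) = _
    rw [← List.map_map, hL, List.map_flatMap]
    congr 1
    funext i
    simp [hXY i, List.map_congr_left (fun a ha => decide_eq_true (hYs i a ha)), List.map_const']
  rw [lostBlocks, hmarks, risingEdges_flatMap_false_cons_replicate_true _ _ _
    fun i _ => List.length_pos_iff.mpr (hYne i), List.length_finRange]

lemma setOf_mem_eq_range_of_cnp_eq {c : α → ℕ} (hXY : ∀ i, x i ∉ Y)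
    (hall : ∀ a : α, (∃ i, a = x i) ∨ a ∈ Y) (hc1 : ∀ i, c (x i) = 1)
    (hc0 : ∀ a ∈ Y, c a = 0) {F : List α} (hF : cnp F = c) :
    {a | a ∈ F} = Set.range x := by
  ext a
  rw [Set.mem_ofPred_eq, ← List.count_pos_iff, show F.count a = c a from congrFun hF a]
  rcases hall a with ⟨i, rfl⟩ | ha
  · simp [hc1 i]
  · simp only [hc0 a ha, lt_irrefl, false_iff]
    rintro ⟨i, rfl⟩
    exact hXY i ha

lemma cnp_map_finRange {c : α → ℕ} (hx : Function.Injective x) (hXY : ∀ i, x i ∉ Y)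
    (hall : ∀ a : α, (∃ i, a = x i) ∨ a ∈ Y) (hc1 : ∀ i, c (x i) = 1)
    (hc0 : ∀ a ∈ Y, c a = 0) :
    cnp ((List.finRange n).map x) = c := by
  funext a
  rcases hall a with ⟨i, rfl⟩ | ha
  · simp [cnp, List.count_map_of_injective _ x hx, hc1 i]
  · rw [cnp, hc0 a ha, List.count_eq_zero]
    rintro hmem
    obtain ⟨i, -, rfl⟩ := List.mem_map.mp hmem
    exact hXY i ha

end Alternating

/-- equality case of Lemma 5 of the paper: let the alphabet `α` be the
disjoint union of `X = {x 0, …, x (n−1)}` (the `x i` being pairwise distinct) and `Y`.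
Let `G = x₁ Y₁ x₂ Y₂ ⋯ xₙ Yₙ` where each `Yᵢ` is a nonempty string over `Y`, and let
`c` be the CNP with `c(xᵢ) = 1` for all `i` and `c(y) = 0` for all `y ∈ Y`.
Then `d_GCNP(G, c) = n`; in particular the distance is achieved by a sequence of `n`
deletions (removing the substrings `Y₁, …, Yₙ`). -/
theorem alternating_eq
    {α : Type*} [DecidableEq α] (n : ℕ)
    (x : Fin n → α) (hx : Function.Injective x)
    (Y : Set α)
    (hXY : ∀ i, x i ∉ Y)
    (hall : ∀ a : α, (∃ i, a = x i) ∨ a ∈ Y)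
    (Ys : Fin n → List α)
    (hYs : ∀ i, ∀ a ∈ Ys i, a ∈ Y)
    (hYne : ∀ i, Ys i ≠ [])
    (c : α → ℕ)
    (hc1 : ∀ i, c (x i) = 1)
    (hc0 : ∀ a ∈ Y, c a = 0)
    (G : List α)
    (hG : G = (List.finRange n).flatMap (fun i => x i :: Ys i)) :
    dGCNP G c = (n : ℕ∞) ∧
    ∃ E : List GEvent,
      (∀ e ∈ E, ∃ i j, e = GEvent.del i j) ∧
      E.length = n ∧
      ValidSeq G E ∧
      cnp (applyEvents G E) = c := by
  have lower : ∀ E, ValidSeq G E → cnp (applyEvents G E) = c → n ≤ E.length := by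
    intro E hE hcnp
    obtain ⟨L, hL, hkept, hcost⟩ := exists_marking_of_validSeq hE
    rw [setOf_mem_eq_range_of_cnp_eq hXY hall hc1 hc0 hcnp] at hkept
    exact (n_le_lostBlocks hx hXY hYs hYne (hG ▸ hL) hkept).trans hcost
  obtain ⟨E, hdel, hlen, hvalid, happ⟩ :=
    exists_deletions_flatMap x Ys hYne (List.finRange n) []
  simp only [List.nil_append, ← hG] at hvalid happ
  rw [List.length_finRange] at hlen
  have hcnp : cnp (applyEvents G E) = c := happ ▸ cnp_map_finRange hx hXY hall hc1 hc0
  refine ⟨le_antisymm (sInf_le ⟨E, hvalid, by rw [hlen], hcnp⟩) (le_sInf ?_),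
    E, hdel, hlen, hvalid, hcnp⟩
  rintro k ⟨E', hE', rfl, hcnp'⟩
  exact_mod_cast lower E' hE' hcnp'
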